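/- arXiv:1811.11271 — 3 statements merged into one kernel-verified Lean document; each statement's English description precedes it below -/
import Mathlib

section
/- Let π : A → M be a continuous surjection such that each fiber Aₘ carries an L-structure where relation symbols are interpreted by open sets of the fibered products and function symbols by continuous fiberwise maps. Let φ(x₁,...,xₙ) be a first-order L-formula built using only ∧, ∨, ∃ and atomic formulas not involving equality. If s₁, ..., sₙ are continuous local sections defined at m ∈ M, every point of A admits a continuous local section through it, and Aₘ ⊨ φ(s₁(m),...,sₙ(m)), then there exists an open neighborhood V of m such that Aₘ' ⊨ φ(s₁(m'),...,sₙ(m')) for all m' ∈ V. -/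
/-- A first-order signature: relation and function symbols with arities
(constants are 0-ary function symbols). -/
structure Lang where
  Rel : ℕ → Type
  Fun : ℕ → Type

variable {A M : Type} [TopologicalSpace A] [TopologicalSpace M]

/-- The `k`-fold fibered direct sum `⊕ᵏA` of a bundle `π : A → M`,
realized as tuples over a common base point, with the subspace topology. -/
abbrev FibSum (π : A → M) (k : ℕ) : Type :=
  {p : M × (Fin k → A) // ∀ i, π (p.2 i) = p.1}

/-- The fiber of `π : A → M` over `m`. -/
abbrev Fiber (π : A → M) (m : M) : Type := {x : A // π x = m}

/-- A fiber bundle of `L`-structures (topological version): each fiber carries an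
`L`-structure, relation symbols are interpreted by open subsets of the fibered sums,
and function symbols by continuous fiber-preserving maps. -/
structure FStr (L : Lang) (π : A → M) where
  rel : ∀ {k}, L.Rel k → Set (FibSum π k)
  fn : ∀ {k}, L.Fun k → FibSum π k → A
  fn_fiber : ∀ {k} (f : L.Fun k) (p : FibSum π k), π (fn f p) = p.val.1
  rel_open : ∀ {k} (R : L.Rel k), IsOpen (rel R)
  fn_cont : ∀ {k} (f : L.Fun k), Continuous (fn f)

/-- `L`-terms with `n` free variables. -/
inductive Term (L : Lang) (n : ℕ) : Type
  | var : Fin n → Term L n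
  | func : {k : ℕ} → L.Fun k → (Fin k → Term L n) → Term L n

/-- First-order `L`-formulas with `n` free variables. -/
inductive Form (L : Lang) : ℕ → Type
  | eq {n} : Term L n → Term L n → Form L n
  | rel {n k} : L.Rel k → (Fin k → Term L n) → Form L n
  | and {n} : Form L n → Form L n → Form L n
  | or {n} : Form L n → Form L n → Form L n
  | imp {n} : Form L n → Form L n → Form L n
  | not {n} : Form L n → Form L n
  | ex {n} : Form L (n + 1) → Form L n
  | all {n} : Form L (n + 1) → Form L n

variable {L : Lang} {π : A → M}

/-- Fiberwise evaluation of a term at base point `m`. -/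
def Term.eval (S : FStr L π) (m : M) {n} (a : Fin n → Fiber π m) :
    Term L n → Fiber π m
  | .var i => a i
  | .func f ts =>
      ⟨S.fn f ⟨(m, fun i => ((ts i).eval S m a).val),
          fun i => ((ts i).eval S m a).property⟩, S.fn_fiber f _⟩

/-- Tarski satisfaction in the fiber over `m`. -/
def SatAt (S : FStr L π) (m : M) : ∀ {n}, Form L n → (Fin n → Fiber π m) → Prop
  | _, .eq t₁ t₂, a => t₁.eval S m a = t₂.eval S m a
  | _, .rel R ts, a =>
      (⟨(m, fun i => ((ts i).eval S m a).val),
        fun i => ((ts i).eval S m a).property⟩ : FibSum π _) ∈ S.rel R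
  | _, .and φ ψ, a => SatAt S m φ a ∧ SatAt S m ψ a
  | _, .or φ ψ, a => SatAt S m φ a ∨ SatAt S m ψ a
  | _, .imp φ ψ, a => SatAt S m φ a → SatAt S m ψ a
  | _, .not φ, a => ¬ SatAt S m φ a
  | _, .ex φ, a => ∃ b : Fiber π m, SatAt S m φ (Fin.cons b a)
  | _, .all φ, a => ∀ b : Fiber π m, SatAt S m φ (Fin.cons b a)

/-- `s` is a continuous local section of `π` on the open set `U`. -/
def IsLocalSectionOn (π : A → M) (s : M → A) (U : Set M) : Prop :=
  IsOpen U ∧ ContinuousOn s U ∧ ∀ x ∈ U, π (s x) = x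

/-- `s` is a local section of `π` defined at `m`. -/
def IsLocalSectionAt (π : A → M) (s : M → A) (m : M) : Prop :=
  ∃ U, m ∈ U ∧ IsLocalSectionOn π s U

/-- Pointwise forcing `A ⊩ₘ φ(s₁,…,sₙ)` on a fiber bundle of structures. -/
def Force (S : FStr L π) : ∀ {n}, Form L n → (Fin n → M → A) → M → Prop
  | _, .eq t₁ t₂, s, m => ∃ U, IsOpen U ∧ m ∈ U ∧ ∀ u ∈ U,
      ∃ h : ∀ i, π (s i u) = u,
        t₁.eval S u (fun i => ⟨s i u, h i⟩) = t₂.eval S u (fun i => ⟨s i u, h i⟩)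
  | _, .rel R ts, s, m => ∃ U, IsOpen U ∧ m ∈ U ∧ ∀ u ∈ U,
      ∃ h : ∀ i, π (s i u) = u,
        SatAt S u (.rel R ts) (fun i => ⟨s i u, h i⟩)
  | _, .and φ ψ, s, m => Force S φ s m ∧ Force S ψ s m
  | _, .or φ ψ, s, m => Force S φ s m ∨ Force S ψ s m
  | _, .imp φ ψ, s, m => ∃ U, IsOpen U ∧ m ∈ U ∧ ∀ u ∈ U,
      Force S φ s u → Force S ψ s u
  | _, .not φ, s, m => ∃ U, IsOpen U ∧ m ∈ U ∧ ∀ u ∈ U, ¬ Force S φ s u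
  | _, .ex φ, s, m => ∃ t : M → A, IsLocalSectionAt π t m ∧
      Force S φ (Fin.cons t s) m
  | _, .all φ, s, m => ∃ U, IsOpen U ∧ m ∈ U ∧ ∀ u ∈ U,
      ∀ t : M → A, IsLocalSectionAt π t u → Force S φ (Fin.cons t s) u

/-- Positive existential formulas: built from relational atoms (no equality)
using only `∧`, `∨`, `∃`. -/
inductive Positive : ∀ {n}, Form L n → Prop
  | rel {n k} (R : L.Rel k) (ts : Fin k → Term L n) : Positive (.rel R ts)
  | and {n} {φ ψ : Form L n} : Positive φ → Positive ψ → Positive (.and φ ψ)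
  | or {n} {φ ψ : Form L n} : Positive φ → Positive ψ → Positive (.or φ ψ)
  | ex {n} {φ : Form L (n + 1)} : Positive φ → Positive (.ex φ)


theorem term_eval_cont (S : FStr L π) {n} (s : Fin n → M → A) (U : Set M)
    (hmem : ∀ u ∈ U, ∀ i, π (s i u) = u) (hc : ∀ i, ContinuousOn (s i) U)
    (t : Term L n) :
    Continuous (fun u : U =>
      ((t.eval S u (fun j => ⟨s j u, hmem u u.2 j⟩)).val)) := by
  induction t with
  | var i => exact continuousOn_iff_continuous_restrict.mp (hc i)
  | func f ts ih =>
    exact (S.fn_cont f).comp (Continuous.subtype_mk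
      ((continuous_subtype_val).prodMk (continuous_pi fun i => ih i)) _)

theorem positive_ext_aux
    (π : A → M) (S : FStr L π)
    (hlift : ∀ a : A, ∃ t : M → A, IsLocalSectionAt π t (π a) ∧ t (π a) = a)
    {n} {φ : Form L n} (hφ : Positive φ) :
    ∀ (s : Fin n → M → A) (m : M),
    (∀ i, IsLocalSectionAt π (s i) m) →
    ∀ (hm : ∀ i, π (s i m) = m),
    SatAt S m φ (fun i => ⟨s i m, hm i⟩) →
    ∃ V, IsOpen V ∧ m ∈ V ∧ ∀ m' ∈ V,
      ∃ h : ∀ i, π (s i m') = m', SatAt S m' φ (fun i => ⟨s i m', h i⟩) := by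
  induction hφ with
  | @rel n k R ts =>
    intro s m hs hm hsat
    choose U hU hUsec using hs
    set W := ⋂ i, U i with hW
    have hWopen : IsOpen W := isOpen_iInter_of_finite fun i => (hUsec i).1
    have hmW : m ∈ W := Set.mem_iInter.mpr hU
    have hmem : ∀ u ∈ W, ∀ i, π (s i u) = u := fun u hu i =>
      (hUsec i).2.2 u (Set.mem_iInter.mp hu i)
    have hc : ∀ i, ContinuousOn (s i) W := fun i =>
      ((hUsec i).2.1).mono (Set.iInter_subset U i)
    have F : Continuous (fun u : W =>
        (⟨((u : M), fun i => (((ts i).eval S u (fun j => ⟨s j u, hmem u u.2 j⟩)).val)),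
          fun i => (((ts i).eval S u (fun j => ⟨s j u, hmem u u.2 j⟩)).property)⟩ :
          FibSum π k)) :=
      Continuous.subtype_mk
        ((continuous_subtype_val).prodMk
          (continuous_pi fun i => term_eval_cont S s W hmem hc (ts i))) _
    have hopen : IsOpen ((fun u : W =>
        (⟨((u : M), fun i => (((ts i).eval S u (fun j => ⟨s j u, hmem u u.2 j⟩)).val)),
          fun i => (((ts i).eval S u (fun j => ⟨s j u, hmem u u.2 j⟩)).property)⟩ :
          FibSum π k)) ⁻¹' (S.rel R)) := (S.rel_open R).preimage F
    refine ⟨Subtype.val '' ((fun u : W =>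
        (⟨((u : M), fun i => (((ts i).eval S u (fun j => ⟨s j u, hmem u u.2 j⟩)).val)),
          fun i => (((ts i).eval S u (fun j => ⟨s j u, hmem u u.2 j⟩)).property)⟩ :
          FibSum π k)) ⁻¹' (S.rel R)), hWopen.isOpenMap_subtype_val _ hopen, ?_, ?_⟩
    · exact ⟨⟨m, hmW⟩, hsat, rfl⟩
    · rintro m' ⟨⟨u, hu⟩, hmem', rfl⟩
      exact ⟨hmem u hu, hmem'⟩
  | and _ _ ih1 ih2 =>
    intro s m hs hm hsat
    obtain ⟨V1, hV1, hm1, h1⟩ := ih1 s m hs hm hsat.1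
    obtain ⟨V2, hV2, hm2, h2⟩ := ih2 s m hs hm hsat.2
    refine ⟨V1 ∩ V2, hV1.inter hV2, ⟨hm1, hm2⟩, fun m' hm' => ?_⟩
    obtain ⟨ha, hsa⟩ := h1 m' hm'.1
    obtain ⟨hb, hsb⟩ := h2 m' hm'.2
    exact ⟨ha, hsa, hsb⟩
  | or _ _ ih1 ih2 =>
    intro s m hs hm hsat
    rcases hsat with hsat | hsat
    · obtain ⟨V, hV, hmV, h⟩ := ih1 s m hs hm hsat
      exact ⟨V, hV, hmV, fun m' hm' => by
        obtain ⟨ha, hsa⟩ := h m' hm'; exact ⟨ha, Or.inl hsa⟩⟩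
    · obtain ⟨V, hV, hmV, h⟩ := ih2 s m hs hm hsat
      exact ⟨V, hV, hmV, fun m' hm' => by
        obtain ⟨ha, hsa⟩ := h m' hm'; exact ⟨ha, Or.inr hsa⟩⟩
  | @ex n φ _ ih =>
    intro s m hs hm hsat
    obtain ⟨b, hb⟩ := hsat
    obtain ⟨t, ht, htb⟩ := hlift b.val
    rw [b.property] at ht htb
    have hs' : ∀ i, IsLocalSectionAt π ((Fin.cons t s : Fin (n+1) → M → A) i) m := by
      intro i
      refine Fin.cases ?_ ?_ i
      · exact ht
      · intro j; exact hs j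
    have hm' : ∀ i, π ((Fin.cons t s : Fin (n+1) → M → A) i m) = m := by
      intro i
      refine Fin.cases ?_ ?_ i
      · show π (t m) = m
        rw [htb, b.property]
      · intro j; exact hm j
    have heq : (fun i => (⟨(Fin.cons t s : Fin (n+1) → M → A) i m, hm' i⟩ : Fiber π m)) =
        Fin.cons b (fun i => ⟨s i m, hm i⟩) := by
      funext i
      refine Fin.cases ?_ ?_ i
      · apply Subtype.ext
        show t m = b.val
        exact htb
      · intro j
        apply Subtype.ext
        rfl
    have hsat' : SatAt S m φ (fun i => ⟨(Fin.cons t s : Fin (n+1) → M → A) i m, hm' i⟩) := by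
      rw [heq]; exact hb
    obtain ⟨V, hV, hmV, h⟩ := ih ((Fin.cons t s : Fin (n+1) → M → A)) m hs' hm' hsat'
    refine ⟨V, hV, hmV, fun m' hm'' => ?_⟩
    obtain ⟨h', hsat''⟩ := h m' hm''
    refine ⟨fun i => h' i.succ, ?_⟩
    refine ⟨⟨t m', h' 0⟩, ?_⟩
    have heq2 : Fin.cons (⟨t m', h' 0⟩ : Fiber π m')
        (fun i => (⟨s i m', h' i.succ⟩ : Fiber π m')) =
        fun i => (⟨(Fin.cons t s : Fin (n+1) → M → A) i m', h' i⟩ : Fiber π m') := by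
      funext i
      refine Fin.cases ?_ ?_ i
      · apply Subtype.ext; rfl
      · intro j; apply Subtype.ext; rfl
    rw [heq2]
    exact hsat''

/-- for a positive existential formula `φ` (built from relational
atoms without equality using only `∧`, `∨`, `∃`), fiberwise truth on sections at a
point extends to an open neighborhood, assuming every point of `A` lies on a
continuous local section. -/
theorem positive_formula_extension
    (π : A → M) (hπcont : Continuous π) (hπsurj : Function.Surjective π)
    (S : FStr L π) {n} (φ : Form L n) (hφ : Positive φ)
    (s : Fin n → M → A) (m : M)
    (hs : ∀ i, IsLocalSectionAt π (s i) m)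
    (hlift : ∀ a : A, ∃ t : M → A, IsLocalSectionAt π t (π a) ∧ t (π a) = a)
    (hm : ∀ i, π (s i m) = m)
    (hsat : SatAt S m φ (fun i => ⟨s i m, hm i⟩)) :
    ∃ V, IsOpen V ∧ m ∈ V ∧ ∀ m' ∈ V,
      ∃ h : ∀ i, π (s i m') = m', SatAt S m' φ (fun i => ⟨s i m', h i⟩) :=
  positive_ext_aux π S hlift hφ s m hs hm hsat
end

section
/- Consider the bundle ρ : ℝ³ → ℝ², ρ(x,y,z) = (x,y), with unary relation R^A = {(x,y,z) : z ≠ 0}, the section s(x,y) = (x, y, x + y), and the curve σ(t) = (t, -t). Then A ⊩_{(0,0)} ¬¬R(s) (i.e., {(x,y) : x + y ≠ 0} is dense in every sufficiently small neighborhood of (0,0), indeed in ℝ²), but the pulled-back section s̃(t) = (t, (t,-t,0)) satisfies σ*(A) ⊮₀ ¬¬R(s̃) (i.e., {t : 0 ≠ 0} = ∅ is not dense in any neighborhood of 0). -/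
/-- `R^A = {(x,y,z) : z ≠ 0}` in the bundle `ρ : ℝ³ → ℝ²`, `ρ(x,y,z) = (x,y)`. -/
def RA : Set (ℝ × ℝ × ℝ) := {p | p.2.2 ≠ 0}

/-- with section `s(x,y) = (x,y,x+y)` and curve `σ(t) = (t,-t)`:
`A ⊩_{(0,0)} ¬¬R(s)` — the set where `s` lands in `R^A` is dense in a neighborhood
of `(0,0)` — but the pulled-back section `s̃(t) = (t,(t,-t,0))` satisfies
`σ*(A) ⊮₀ ¬¬R(s̃)`: the set where it lands in `R^A` is dense in no neighborhood
of `0`.  Forcing is not compatible with pullback. -/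
theorem forcing_not_compatible_with_pullback :
    (∃ U : Set (ℝ × ℝ), IsOpen U ∧ ((0 : ℝ), (0 : ℝ)) ∈ U ∧
      U ⊆ closure {u ∈ U | ((u.1, u.2, u.1 + u.2) : ℝ × ℝ × ℝ) ∈ RA}) ∧
    ¬ ∃ V : Set ℝ, IsOpen V ∧ (0 : ℝ) ∈ V ∧
      V ⊆ closure {t ∈ V | ((t, -t, 0) : ℝ × ℝ × ℝ) ∈ RA} := by
  constructor
  · refine ⟨Set.univ, isOpen_univ, trivial, fun u _ => ?_⟩
    by_cases h : u.1 + u.2 = 0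
    · refine mem_closure_of_tendsto (f := fun n : ℕ => ((u.1 + (n + 1 : ℝ)⁻¹, u.2) : ℝ × ℝ)) (b := Filter.atTop) ?_ ?_
      · have h1 : Filter.Tendsto (fun n : ℕ => u.1 + (n + 1 : ℝ)⁻¹) Filter.atTop (nhds u.1) := by
          have := Filter.Tendsto.const_add u.1 tendsto_one_div_add_atTop_nhds_zero_nat
          simpa [one_div] using this
        exact (h1.prodMk_nhds tendsto_const_nhds)
      · filter_upwards with n
        refine ⟨trivial, ?_⟩
        simp only [RA, Set.mem_setOf_eq]
        intro hc
        have : ((n : ℝ) + 1)⁻¹ = 0 := by linarith [hc, h]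
        have : ((n : ℝ) + 1)⁻¹ > 0 := by positivity
        linarith
    · exact subset_closure ⟨trivial, h⟩
  · rintro ⟨V, _, h0, hsub⟩
    have : {t ∈ V | ((t, -t, 0) : ℝ × ℝ × ℝ) ∈ RA} = ∅ := by
      ext t; simp [RA]
    rw [this, closure_empty] at hsub
    exact hsub h0
end

section
/- Let π : A → M be a continuous surjection where each fiber is an L-structure, with relation symbols interpreted by open subsets of fibered sums, and suppose every point of A lies on a continuous local section. If φ is built from atomic non-equality formulas using only ∧, ∨, ∃, then the set {(m, a₁, ..., aₙ) ∈ ⊕ⁿA : A_m ⊨ φ(a₁,...,aₙ)} is open in the fibered sum ⊕ⁿA. -/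
variable {A M : Type} [TopologicalSpace A] [TopologicalSpace M]

variable {L : Lang} {π : A → M}

lemma term_eval_val_cont (S : FStr L π) {n} (t : Term L n) :
    Continuous (fun p : FibSum π n =>
      (Term.eval S p.val.1 (fun i => ⟨p.val.2 i, p.property i⟩) t).val) := by
  induction t with
  | var i =>
    exact (continuous_apply i).comp (continuous_snd.comp continuous_subtype_val)
  | func f ts ih =>
    exact (S.fn_cont f).comp (Continuous.subtype_mk
      (((continuous_fst.comp continuous_subtype_val).prodMk
        (continuous_pi fun i => ih i))) _)

/-- for a positive existential formula `φ` (relational atoms without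
equality, `∧`, `∨`, `∃`), the set `{(m,a₁,…,aₙ) ∈ ⊕ⁿA : A_m ⊨ φ(a₁,…,aₙ)}` is open
in the fibered sum `⊕ⁿA`, assuming every point of `A` lies on a continuous local
section. -/
theorem positive_satisfaction_set_isOpen
    (π : A → M) (hπcont : Continuous π) (hπsurj : Function.Surjective π)
    (S : FStr L π) {n} (φ : Form L n) (hφ : Positive φ)
    (hlift : ∀ a : A, ∃ t : M → A, IsLocalSectionAt π t (π a) ∧ t (π a) = a) :
    IsOpen {p : FibSum π n |
      SatAt S p.val.1 φ (fun i => ⟨p.val.2 i, p.property i⟩)} := by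
  induction hφ with
  | rel R ts =>
    have hcont : Continuous (fun p : FibSum π _ =>
        (⟨(p.val.1, fun i =>
            (Term.eval S p.val.1 (fun j => ⟨p.val.2 j, p.property j⟩) (ts i)).val),
          fun i =>
            (Term.eval S p.val.1 (fun j => ⟨p.val.2 j, p.property j⟩) (ts i)).property⟩ :
          FibSum π _)) := by
      exact Continuous.subtype_mk
        ((continuous_fst.comp continuous_subtype_val).prodMk
          (continuous_pi fun i => term_eval_val_cont S (ts i))) _
    exact hcont.isOpen_preimage _ (S.rel_open R)
  | and _ _ ih1 ih2 => exact ih1.inter ih2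
  | or _ _ ih1 ih2 => exact ih1.union ih2
  | @ex n φ _ ih =>
    rw [isOpen_iff_forall_mem_open]
    rintro p ⟨b, hb⟩
    obtain ⟨t, ⟨U, hmU, hUopen, htcont, htsec⟩, htb⟩ := hlift b.val
    have hπb : π b.val = p.val.1 := b.property
    rw [hπb] at hmU htb
    rw [isOpen_induced_iff] at ih
    obtain ⟨O, hOopen, hO⟩ := ih
    have hfib : ∀ (q : FibSum π n) (c : A), π c = q.val.1 →
        ∀ i : Fin (n + 1), π ((Fin.cons c q.val.2 : Fin (n + 1) → A) i) = q.val.1 := by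
      intro q c hc i
      induction i using Fin.cases with
      | zero => simpa using hc
      | succ j => simpa using q.property j
    -- key congruence: satisfaction only depends on values
    have key : ∀ (q : FibSum π n) (c : A) (hc : π c = q.val.1),
        SatAt S q.val.1 φ (Fin.cons (⟨c, hc⟩ : Fiber π q.val.1)
          (fun i => ⟨q.val.2 i, q.property i⟩)) ↔
        (⟨(q.val.1, Fin.cons c q.val.2), hfib q c hc⟩ : FibSum π (n + 1)) ∈
          {r : FibSum π (n + 1) |
            SatAt S r.val.1 φ (fun i => ⟨r.val.2 i, r.property i⟩)} := by
      intro q c hc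
      have harg : (Fin.cons (⟨c, hc⟩ : Fiber π q.val.1)
          (fun i => ⟨q.val.2 i, q.property i⟩)) =
          fun i : Fin (n + 1) =>
            (⟨(Fin.cons c q.val.2 : Fin (n + 1) → A) i, hfib q c hc i⟩ :
              Fiber π q.val.1) := by
        funext i
        refine Fin.cases (motive := fun i =>
          (Fin.cons (⟨c, hc⟩ : Fiber π q.val.1)
            (fun i => ⟨q.val.2 i, q.property i⟩) :
            Fin (n + 1) → Fiber π q.val.1) i =
          (⟨(Fin.cons c q.val.2 : Fin (n + 1) → A) i, hfib q c hc i⟩ :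
            Fiber π q.val.1)) ?_ ?_ i
        · apply Subtype.ext; simp
        · intro j; apply Subtype.ext; simp
      rw [harg]
      rfl
    refine ⟨{q : FibSum π n | q.val.1 ∈ U ∧
        ((q.val.1, Fin.cons (t q.val.1) q.val.2) : M × (Fin (n + 1) → A)) ∈ O},
      ?_, ?_, ?_⟩
    · -- subset
      rintro q ⟨hqU, hqO⟩
      have hct : π (t q.val.1) = q.val.1 := htsec _ hqU
      have hmem : (⟨(q.val.1, Fin.cons (t q.val.1) q.val.2),
            hfib q _ hct⟩ : FibSum π (n + 1)) ∈ Subtype.val ⁻¹' O := hqO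
      rw [hO] at hmem
      exact ⟨⟨t q.val.1, hct⟩, (key q (t q.val.1) hct).2 hmem⟩
    · -- open
      have hV : IsOpen {q : FibSum π n | q.val.1 ∈ U} :=
        (continuous_fst.comp continuous_subtype_val).isOpen_preimage _ hUopen
      have hF : ContinuousOn (fun q : FibSum π n =>
          ((q.val.1, Fin.cons (t q.val.1) q.val.2) : M × (Fin (n + 1) → A)))
          {q : FibSum π n | q.val.1 ∈ U} := by
        apply ContinuousOn.prodMk
        · exact (continuous_fst.comp continuous_subtype_val).continuousOn
        · apply continuousOn_pi.2
          intro i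
          refine Fin.cases (motive := fun i => ContinuousOn
            (fun q : FibSum π n =>
              (Fin.cons (t q.val.1) q.val.2 : Fin (n + 1) → A) i)
            {q : FibSum π n | q.val.1 ∈ U}) ?_ ?_ i
          · exact htcont.comp
              (continuous_fst.comp continuous_subtype_val).continuousOn
              (fun q hq => hq)
          · intro j
            exact ((continuous_apply j).comp
              (continuous_snd.comp continuous_subtype_val)).continuousOn
      exact hF.isOpen_inter_preimage hV hOopen
    · -- membership of p
      refine ⟨hmU, ?_⟩
      rw [htb]
      have hmem : (⟨(p.val.1, Fin.cons b.val p.val.2),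
            hfib p _ hπb⟩ : FibSum π (n + 1)) ∈ Subtype.val ⁻¹' O := by
        rw [hO]
        exact (key p b.val hπb).1 (by
          have : b = (⟨b.val, hπb⟩ : Fiber π p.val.1) := Subtype.ext rfl
          rwa [this] at hb)
      exact hmem
end
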